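/- Theorem (main): For every positive integer l, there exist sets A, B ⊆ ℕ with R_A = R_B, A ∪ B = ℕ, and A ∩ B = {(2^{2l}−1) + (2^{2l+1}−1)·k : k ∈ ℕ}, an infinite arithmetic progression properly contained in ℕ. In particular, A ≠ B, the symmetric difference of A and B is infinite, and their intersection is infinite. -/

import Mathlib

/-- Representation function: number of unordered representations of `n`
as `s' + s''` with `s' < s''`, both in `S`. -/
noncomputable def R (S : Set ℕ) (n : ℕ) : ℕ :=
  {p : ℕ × ℕ | p.1 ∈ S ∧ p.2 ∈ S ∧ p.1 < p.2 ∧ p.1 + p.2 = n}.ncard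

/-- Translate of a set: `m + S`. -/
def tr (m : ℕ) (S : Set ℕ) : Set ℕ := (m + ·) '' S

/-!
If `R A = R B`, every element of `A` lies below every element of `m + B` and every element of `B`
below every element of `m + A`, then `R (A ∪ (m + B)) = R (B ∪ (m + A))`: representations split
into those inside the lower set, those inside the translate (counted by `R` at `n - 2m`) and the
cross ones, and the cross representations `a + (m + b)` of the two sides correspond to each other
through `(a, m + b) ↦ (m + a, b)` and a swap.

With `m_i = 2 ^ (i + 1)` this doubling builds the Thue–Morse partition of `ℕ`. Shortening the shift
by one at step `2l - 1` keeps the separation (as `0 ∉ B` and `2 ^ (2l) - 1 ∈ A`), but makes the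
two halves overlap in exactly `2 ^ (2l) - 1`; from then on every shift equals the current length
`2 ^ (i - 2l) (2 ^ (2l + 1) - 1)`, so the overlap doubles at each step into the progression.
Membership of `x` is settled once `m_i > x`, which passes `R`, the union and the intersection to
the limit.
-/
section Translate

variable {m x : ℕ} {S T : Set ℕ}

theorem mem_tr : x ∈ tr m S ↔ ∃ s ∈ S, m + s = x := Iff.rfl

theorem le_of_mem_tr (hx : x ∈ tr m S) : m ≤ x := by
  obtain ⟨s, -, rfl⟩ := hx
  exact Nat.le_add_right m s

theorem tr_union : tr m (S ∪ T) = tr m S ∪ tr m T := Set.image_union _ _ _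

theorem tr_inter : tr m (S ∩ T) = tr m S ∩ tr m T :=
  Set.image_inter (add_right_injective m)

theorem Iio_union_tr_Iio {N : ℕ} (hm : m ≤ N) :
    Set.Iio N ∪ tr m (Set.Iio N) = Set.Iio (m + N) := by
  ext x
  simp only [Set.mem_union, Set.mem_Iio, mem_tr]
  constructor
  · rintro (hx | ⟨s, hs, rfl⟩) <;> omega
  · intro hx
    by_cases h : x < N
    · exact Or.inl h
    · exact Or.inr ⟨x - m, by omega, by omega⟩

theorem mem_union_tr_iff_of_lt (hx : x < m) : x ∈ S ∪ tr m T ↔ x ∈ S :=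
  ⟨fun h => h.resolve_right fun h' => (le_of_mem_tr h').not_gt hx, Or.inl⟩

end Translate

noncomputable def crossRep (S T : Set ℕ) (n : ℕ) : ℕ :=
  {p : ℕ × ℕ | p.1 ∈ S ∧ p.2 ∈ T ∧ p.1 + p.2 = n}.ncard

section Representation

variable {S T : Set ℕ} {m n : ℕ}

theorem finite_of_forall_add_eq {P : ℕ × ℕ → Prop} (h : ∀ p, P p → p.1 + p.2 = n) :
    {p | P p}.Finite :=
  (Finset.HasAntidiagonal.antidiagonal n).finite_toSet.subset fun p hp =>
    Finset.HasAntidiagonal.mem_antidiagonal.2 (h p hp)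

theorem R_union_of_forall_lt (h : ∀ s ∈ S, ∀ t ∈ T, s < t) :
    R (S ∪ T) n = R S n + R T n + crossRep S T n := by
  have hST : {p : ℕ × ℕ | p.1 ∈ S ∪ T ∧ p.2 ∈ S ∪ T ∧ p.1 < p.2 ∧ p.1 + p.2 = n} =
      ({p | p.1 ∈ S ∧ p.2 ∈ S ∧ p.1 < p.2 ∧ p.1 + p.2 = n} ∪
        {p | p.1 ∈ T ∧ p.2 ∈ T ∧ p.1 < p.2 ∧ p.1 + p.2 = n}) ∪
        {p | p.1 ∈ S ∧ p.2 ∈ T ∧ p.1 + p.2 = n} := by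
    ext ⟨x, y⟩
    have := h x; have := h y
    simp only [Set.mem_ofPred_eq, Set.mem_union]
    grind
  have hfin {P : ℕ × ℕ → Prop} (hP : ∀ p, P p → p.1 + p.2 = n) := finite_of_forall_add_eq hP
  rw [R, hST, Set.ncard_union_eq _ ((hfin fun _ h => h.2.2.2).union (hfin fun _ h => h.2.2.2))
    (hfin fun _ h => h.2.2),
    Set.ncard_union_eq _ (hfin fun _ h => h.2.2.2) (hfin fun _ h => h.2.2.2)]
  · rfl
  all_goals
    simp only [Set.disjoint_left, Set.mem_union, Set.mem_ofPred_eq]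
    rintro ⟨x, y⟩
    have := h x; have := h y
    grind

-- For `n < 2 * m` both sides vanish, the right one because `n - 2 * m = 0`.
theorem R_tr : R (tr m S) n = R S (n - 2 * m) := by
  refine Set.ncard_congr (fun p _ => (p.1 - m, p.2 - m)) ?_ ?_ ?_
  · rintro ⟨-, -⟩ ⟨⟨a, ha, rfl⟩, ⟨b, hb, rfl⟩, hab, rfl⟩
    simp only at hab ⊢
    exact ⟨by simpa using ha, by simpa using hb, by omega, by omega⟩
  · rintro ⟨-, -⟩ ⟨-, -⟩ ⟨⟨a, -, rfl⟩, ⟨b, -, rfl⟩, -⟩ ⟨⟨c, -, rfl⟩, ⟨d, -, rfl⟩, -⟩ h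
    simp only [Prod.mk.injEq] at h ⊢
    omega
  · rintro ⟨a, b⟩ ⟨ha, hb, hab, hsum⟩
    exact ⟨(m + a, m + b), ⟨⟨a, ha, rfl⟩, ⟨b, hb, rfl⟩, by omega, by omega⟩, by simp⟩

theorem crossRep_comm : crossRep S T n = crossRep T S n :=
  Set.ncard_congr (fun p _ => p.swap)
    (fun _ ⟨hs, ht, hsum⟩ => ⟨ht, hs, by simp only [Prod.fst_swap, Prod.snd_swap]; omega⟩)
    (fun _ _ _ _ h => Prod.swap_injective h)
    (fun p ⟨ht, hs, hsum⟩ =>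
      ⟨p.swap, ⟨hs, ht, by simp only [Prod.fst_swap, Prod.snd_swap]; omega⟩, p.swap_swap⟩)

theorem crossRep_tr_right : crossRep S (tr m T) n = crossRep (tr m S) T n := by
  refine Set.ncard_congr (fun p _ => (m + p.1, p.2 - m)) ?_ ?_ ?_
  · rintro ⟨a, -⟩ ⟨ha, ⟨b, hb, rfl⟩, h⟩
    exact ⟨⟨a, ha, rfl⟩, by simpa using hb, by simp only at h ⊢; omega⟩
  · rintro ⟨a, -⟩ ⟨c, -⟩ ⟨-, ⟨b, -, rfl⟩, -⟩ ⟨-, ⟨d, -, rfl⟩, -⟩ h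
    simp only [Prod.mk.injEq] at h ⊢
    omega
  · rintro ⟨-, b⟩ ⟨⟨a, ha, rfl⟩, hb, h⟩
    exact ⟨(a, m + b), ⟨ha, ⟨b, hb, rfl⟩, by simp only at h ⊢; omega⟩, by simp⟩

theorem R_singleton (x : ℕ) : R {x} n = 0 := by
  rw [R, ← Set.ncard_empty (ℕ × ℕ)]
  congr 1
  ext ⟨a, b⟩
  simp only [Set.mem_ofPred_eq, Set.mem_singleton_iff, Set.mem_empty_iff_false, iff_false]
  omega

theorem R_congr (h : ∀ x ≤ n, x ∈ S ↔ x ∈ T) : R S n = R T n := by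
  refine congrArg Set.ncard (Set.ext fun p => ?_)
  simp only [Set.mem_ofPred_eq]
  constructor <;> rintro ⟨h1, h2, hlt, hsum⟩
  · exact ⟨(h _ (by omega)).1 h1, (h _ (by omega)).1 h2, hlt, hsum⟩
  · exact ⟨(h _ (by omega)).2 h1, (h _ (by omega)).2 h2, hlt, hsum⟩

end Representation

section Doubling

variable {A B : Set ℕ} {m : ℕ}

theorem union_tr_union_union_tr :
    (A ∪ tr m B) ∪ (B ∪ tr m A) = (A ∪ B) ∪ tr m (A ∪ B) := by
  rw [tr_union]
  ext
  simp only [Set.mem_union]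
  tauto

theorem union_tr_inter_union_tr (h : A ∪ B ⊆ Set.Iio m) :
    (A ∪ tr m B) ∩ (B ∪ tr m A) = (A ∩ B) ∪ tr m (A ∩ B) := by
  have hlow : ∀ x ∈ A ∪ B, x ∉ tr m A ∪ tr m B := fun x hx hx' =>
    (h hx).not_ge (hx'.elim le_of_mem_tr le_of_mem_tr)
  rw [tr_inter]
  ext x
  have := hlow x
  simp only [Set.mem_union, Set.mem_inter_iff] at this ⊢
  tauto

theorem union_tr_pred_inter_union_tr {N : ℕ} (h : A ∪ B ⊆ Set.Iio N) (hdisj : A ∩ B = ∅)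
    (h0A : 0 ∈ A) (h0B : 0 ∉ B) (htop : N - 1 ∈ A) :
    (A ∪ tr (N - 1) B) ∩ (B ∪ tr (N - 1) A) = {N - 1} := by
  have hA : ∀ a ∈ A, a < N := fun a ha => h (Or.inl ha)
  have hB : ∀ b ∈ B, b < N := fun b hb => h (Or.inr hb)
  have hAB : ∀ x ∈ A, x ∉ B := fun x ha hb => (Set.mem_empty_iff_false x).1 (hdisj ▸ ⟨ha, hb⟩)
  ext x
  simp only [Set.mem_inter_iff, Set.mem_union, mem_tr, Set.mem_singleton_iff]
  constructor
  · rintro ⟨hxA | ⟨b, hb, rfl⟩, hxB | ⟨a, ha, hx⟩⟩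
    · exact absurd hxB (hAB x hxA)
    · have := hA x hxA
      have : a = 0 := by omega
      omega
    · have := hB _ hxB
      have : b ≠ 0 := fun h0 => h0B (h0 ▸ hb)
      omega
    · obtain rfl : a = b := by omega
      exact absurd hb (hAB a ha)
  · rintro rfl
    exact ⟨Or.inl htop, Or.inr ⟨0, h0A, rfl⟩⟩

theorem R_union_tr_eq (hR : R A = R B) (hsep : ∀ a ∈ A, ∀ b ∈ B, a < m + b ∧ b < m + a) :
    R (A ∪ tr m B) = R (B ∪ tr m A) := by
  have hA : ∀ a ∈ A, ∀ t ∈ tr m B, a < t := by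
    rintro a ha _ ⟨b, hb, rfl⟩
    exact (hsep a ha b hb).1
  have hB : ∀ b ∈ B, ∀ t ∈ tr m A, b < t := by
    rintro b hb _ ⟨a, ha, rfl⟩
    exact (hsep a ha b hb).2
  funext n
  rw [R_union_of_forall_lt hA, R_union_of_forall_lt hB, R_tr, R_tr, hR, crossRep_tr_right,
    crossRep_comm]

end Doubling

theorem mem_iUnion_iff_of_stable {S : ℕ → Set ℕ} (hS : Monotone S) {x n : ℕ}
    (hstable : ∀ j, n ≤ j → x ∈ S (j + 1) → x ∈ S j) : x ∈ ⋃ i, S i ↔ x ∈ S n := by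
  refine ⟨fun hx => ?_, fun hx => Set.mem_iUnion.2 ⟨n, hx⟩⟩
  obtain ⟨k, hk⟩ := Set.mem_iUnion.1 hx
  induction k with
  | zero => exact hS (Nat.zero_le n) hk
  | succ j ih =>
    rcases le_or_gt n j with h | h
    · exact ih (hstable j h hk)
    · exact hS h hk

theorem setOf_lt_union_tr (c M n : ℕ) :
    {x | ∃ k < n, x = c + k * M} ∪ tr (n * M) {x | ∃ k < n, x = c + k * M} =
      {x | ∃ k < 2 * n, x = c + k * M} := by
  ext x
  simp only [Set.mem_union, mem_tr, Set.mem_ofPred_eq]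
  constructor
  · rintro (⟨k, hk, rfl⟩ | ⟨_, ⟨k, hk, rfl⟩, rfl⟩)
    · exact ⟨k, by omega, rfl⟩
    · exact ⟨n + k, by omega, by ring⟩
  · rintro ⟨k, hk, rfl⟩
    by_cases h : k < n
    · exact Or.inl ⟨k, h, rfl⟩
    · obtain ⟨k, rfl⟩ : ∃ k', k = n + k' := ⟨k - n, by omega⟩
      exact Or.inr ⟨_, ⟨k, by omega, rfl⟩, by ring⟩

theorem infinite_setOf_eq_add_mul (c : ℕ) {M : ℕ} (hM : 0 < M) :
    {x | ∃ k, x = c + k * M}.Infinite :=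
  Set.infinite_of_injective_forall_mem (f := fun k => c + k * M)
    (fun _ _ h => Nat.eq_of_mul_eq_mul_right hM (by simp only at h; omega)) fun k => ⟨k, rfl⟩

theorem infinite_compl_setOf_eq_add_mul (c : ℕ) {M : ℕ} (hM : 2 ≤ M) :
    {x | ∃ k, x = c + k * M}ᶜ.Infinite := by
  refine Set.infinite_of_injective_forall_mem (f := fun k => c + 1 + k * M)
    (fun _ _ h => Nat.eq_of_mul_eq_mul_right (by omega : 0 < M) (by simp only at h; omega)) ?_
  rintro k ⟨k', h⟩
  have hmod : c + 1 ≡ c + 0 [MOD M] := by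
    rw [Nat.ModEq, ← Nat.add_mul_mod_self_right (c + 1) k M, h, Nat.add_mul_mod_self_right,
      add_zero]
  have := Nat.ModEq.add_left_cancel' c hmod
  rw [Nat.ModEq, Nat.zero_mod, Nat.mod_eq_of_lt (by omega)] at this
  exact one_ne_zero this

namespace PerturbedThueMorse

variable (l : ℕ)

def bound : ℕ → ℕ
  | 0 => 2
  | i + 1 => bound i + if i + 1 = 2 * l then bound i - 1 else bound i

/-- The paper's `m_i`: `2 ^ (i + 1)` for `i + 1 < 2 * l`, then `2 ^ (2 * l) - 1`, then
`2 ^ (i + 1) - 2 ^ (i - 2 * l)`. -/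
def shift (i : ℕ) : ℕ := if i + 1 = 2 * l then bound l i - 1 else bound l i

def stage : ℕ → Set ℕ × Set ℕ
  | 0 => ({0}, {1})
  | i + 1 => ((stage i).1 ∪ tr (shift l i) (stage i).2, (stage i).2 ∪ tr (shift l i) (stage i).1)

abbrev A (i : ℕ) : Set ℕ := (stage l i).1

abbrev B (i : ℕ) : Set ℕ := (stage l i).2

variable {l} {i : ℕ}

theorem A_zero : A l 0 = {0} := rfl

theorem B_zero : B l 0 = {1} := rfl

theorem bound_succ (i : ℕ) : bound l (i + 1) = bound l i + shift l i := rfl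

theorem A_succ (i : ℕ) : A l (i + 1) = A l i ∪ tr (shift l i) (B l i) := rfl

theorem B_succ (i : ℕ) : B l (i + 1) = B l i ∪ tr (shift l i) (A l i) := rfl

theorem shift_eq_bound (h : i + 1 ≠ 2 * l) : shift l i = bound l i := if_neg h

theorem shift_eq_bound_sub_one (h : i + 1 = 2 * l) : shift l i = bound l i - 1 := if_pos h

theorem shift_le_bound : shift l i ≤ bound l i := by
  unfold shift; split <;> omega

theorem bound_le_shift_add_one : bound l i ≤ shift l i + 1 := by
  unfold shift; split <;> omega

theorem add_two_le_bound (i : ℕ) : i + 2 ≤ bound l i := by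
  induction i with
  | zero => exact le_rfl
  | succ i ih =>
    have := bound_le_shift_add_one (l := l) (i := i)
    rw [bound_succ]
    omega

theorem lt_shift (i : ℕ) : i < shift l i := by
  have := add_two_le_bound (l := l) i
  have := bound_le_shift_add_one (l := l) (i := i)
  omega

theorem bound_eq_two_pow (h : i < 2 * l) : bound l i = 2 ^ (i + 1) := by
  induction i with
  | zero => rfl
  | succ i ih => rw [bound_succ, shift_eq_bound (by omega), ih (by omega), pow_succ]; ring

theorem bound_two_mul_add (hl : 1 ≤ l) (j : ℕ) :
    bound l (2 * l + j) = 2 ^ j * (2 ^ (2 * l + 1) - 1) := by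
  induction j with
  | zero =>
    obtain ⟨i, hi⟩ : ∃ i, i + 1 = 2 * l := ⟨2 * l - 1, by omega⟩
    have hpow : 2 ^ (2 * l + 1) = 2 * 2 ^ (2 * l) := pow_succ' 2 (2 * l)
    have := Nat.one_le_two_pow (n := 2 * l)
    rw [add_zero, ← hi, bound_succ, shift_eq_bound_sub_one hi, bound_eq_two_pow (by omega), hi]
    omega
  | succ j ih =>
    rw [← add_assoc, bound_succ, shift_eq_bound (by omega), ih, pow_succ]
    ring

theorem A_union_B (i : ℕ) : A l i ∪ B l i = Set.Iio (bound l i) := by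
  induction i with
  | zero =>
    ext x
    simp only [A, B, stage, bound, Set.mem_union, Set.mem_singleton_iff, Set.mem_Iio]
    omega
  | succ i ih =>
    rw [A_succ, B_succ, union_tr_union_union_tr, ih, Iio_union_tr_Iio shift_le_bound, bound_succ,
      add_comm]

theorem zero_mem_A (i : ℕ) : 0 ∈ A l i := by
  induction i with
  | zero => exact Set.mem_singleton 0
  | succ i ih => exact Or.inl ih

theorem zero_notMem_B (i : ℕ) : 0 ∉ B l i := by
  induction i with
  | zero => simp [B_zero]
  | succ i ih => rwa [B_succ, mem_union_tr_iff_of_lt (by have := lt_shift (l := l) i; omega)]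

theorem A_inter_B_of_lt (h : i < 2 * l) : A l i ∩ B l i = ∅ := by
  induction i with
  | zero => simp [A_zero, B_zero]
  | succ i ih =>
    rw [A_succ, B_succ, shift_eq_bound (by omega),
      union_tr_inter_union_tr (A_union_B i).le, ih (by omega)]
    simp [tr]

-- `bound l i - 1 = 2 ^ (i + 1) - 1` has `i + 1` binary digits `1`: this is its Thue–Morse parity.
theorem pred_bound_mem (h : i < 2 * l) :
    (Even i → bound l i - 1 ∈ B l i) ∧ (Odd i → bound l i - 1 ∈ A l i) := by
  induction i with
  | zero => simp [bound, B_zero]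
  | succ i ih =>
    have htop : bound l (i + 1) - 1 = shift l i + (bound l i - 1) := by
      rw [bound_succ, shift_eq_bound (by omega)]
      have := add_two_le_bound (l := l) i
      omega
    obtain ⟨ihB, ihA⟩ := ih (by omega)
    rw [htop, A_succ, B_succ]
    exact ⟨fun hi => Or.inr ⟨_, ihA (Nat.not_even_iff_odd.1 (Nat.even_add_one.1 hi)), rfl⟩,
      fun hi => Or.inr ⟨_, ihB (Nat.not_odd_iff_even.1 (Nat.odd_add_one.1 hi)), rfl⟩⟩

theorem pred_bound_mem_A (h : i + 1 = 2 * l) : bound l i - 1 ∈ A l i :=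
  (pred_bound_mem (i := i) (by omega)).2 ⟨l - 1, by omega⟩

theorem lt_shift_add : ∀ a ∈ A l i, ∀ b ∈ B l i, a < shift l i + b ∧ b < shift l i + a := by
  intro a ha b hb
  have haN : a < bound l i := (A_union_B i).le (Or.inl ha)
  have hbN : b < bound l i := (A_union_B i).le (Or.inr hb)
  by_cases hi : i + 1 = 2 * l
  · have hb0 : b ≠ 0 := fun h0 => zero_notMem_B i (h0 ▸ hb)
    have hbtop : b ≠ bound l i - 1 := by
      rintro rfl
      have : bound l i - 1 ∈ A l i ∩ B l i := ⟨pred_bound_mem_A hi, hb⟩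
      rwa [A_inter_B_of_lt (by omega)] at this
    rw [shift_eq_bound_sub_one hi]
    omega
  · rw [shift_eq_bound hi]
    omega

theorem R_A_eq_R_B (i : ℕ) : R (A l i) = R (B l i) := by
  induction i with
  | zero => funext n; simp only [A_zero, B_zero, R_singleton]
  | succ i ih => exact R_union_tr_eq ih lt_shift_add

theorem A_inter_B_two_mul (hl : 1 ≤ l) : A l (2 * l) ∩ B l (2 * l) = {2 ^ (2 * l) - 1} := by
  obtain ⟨i, hi⟩ : ∃ i, i + 1 = 2 * l := ⟨2 * l - 1, by omega⟩
  rw [← hi, A_succ, B_succ, shift_eq_bound_sub_one hi,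
    union_tr_pred_inter_union_tr (A_union_B i).le (A_inter_B_of_lt (by omega)) (zero_mem_A i)
      (zero_notMem_B i) (pred_bound_mem_A hi), bound_eq_two_pow (by omega), hi]

theorem A_inter_B_two_mul_add (hl : 1 ≤ l) (j : ℕ) :
    A l (2 * l + j) ∩ B l (2 * l + j) =
      {x | ∃ k < 2 ^ j, x = 2 ^ (2 * l) - 1 + k * (2 ^ (2 * l + 1) - 1)} := by
  induction j with
  | zero =>
    rw [add_zero, A_inter_B_two_mul hl]
    ext x
    simp
  | succ j ih =>
    have hshift : shift l (2 * l + j) = bound l (2 * l + j) := shift_eq_bound (by omega)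
    rw [← add_assoc, A_succ, B_succ, union_tr_inter_union_tr (hshift ▸ (A_union_B _).le), ih,
      hshift, bound_two_mul_add hl, setOf_lt_union_tr, ← pow_succ']

theorem mem_iUnion_A {x n : ℕ} (hx : x ≤ n) : x ∈ ⋃ i, A l i ↔ x ∈ A l n :=
  mem_iUnion_iff_of_stable (monotone_nat_of_le_succ fun _ => Set.subset_union_left)
    fun j hj => (mem_union_tr_iff_of_lt (by have := lt_shift (l := l) j; omega)).1

theorem mem_iUnion_B {x n : ℕ} (hx : x ≤ n) : x ∈ ⋃ i, B l i ↔ x ∈ B l n :=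
  mem_iUnion_iff_of_stable (monotone_nat_of_le_succ fun _ => Set.subset_union_left)
    fun j hj => (mem_union_tr_iff_of_lt (by have := lt_shift (l := l) j; omega)).1

theorem R_iUnion_A_eq_R_iUnion_B : R (⋃ i, A l i) = R (⋃ i, B l i) := by
  funext n
  rw [R_congr fun x hx => mem_iUnion_A hx, R_congr fun x hx => mem_iUnion_B hx, R_A_eq_R_B]

theorem iUnion_A_union_iUnion_B : (⋃ i, A l i) ∪ (⋃ i, B l i) = Set.univ := by
  refine Set.eq_univ_of_forall fun x => ?_
  rw [Set.mem_union, mem_iUnion_A le_rfl, mem_iUnion_B le_rfl, ← Set.mem_union, A_union_B]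
  exact Nat.lt_of_succ_lt (add_two_le_bound x)

theorem iUnion_A_inter_iUnion_B (hl : 1 ≤ l) :
    (⋃ i, A l i) ∩ (⋃ i, B l i) =
      {x | ∃ k, x = 2 ^ (2 * l) - 1 + k * (2 ^ (2 * l + 1) - 1)} := by
  ext x
  have hx : x ≤ 2 * l + x := Nat.le_add_left x _
  rw [Set.mem_inter_iff, mem_iUnion_A hx, mem_iUnion_B hx, ← Set.mem_inter_iff,
    A_inter_B_two_mul_add hl]
  have hM : 1 ≤ 2 ^ (2 * l + 1) - 1 := by have := Nat.one_lt_two_pow (n := 2 * l + 1); omega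
  refine ⟨fun ⟨k, _, hk⟩ => ⟨k, hk⟩, fun ⟨k, hk⟩ => ⟨k, ?_, hk⟩⟩
  calc k ≤ k * (2 ^ (2 * l + 1) - 1) := Nat.le_mul_of_pos_right k hM
    _ ≤ x := by omega
    _ < 2 ^ x := Nat.lt_two_pow_self

end PerturbedThueMorse

open PerturbedThueMorse in
theorem stmt_14 (l : ℕ) (hl : 1 ≤ l) :
    ∃ A B : Set ℕ, R A = R B ∧ A ∪ B = Set.univ ∧
      A ∩ B = {x : ℕ | ∃ k : ℕ, x = 2 ^ (2 * l) - 1 + k * (2 ^ (2 * l + 1) - 1)} ∧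
      A ≠ B ∧ (symmDiff A B).Infinite ∧ (A ∩ B).Infinite := by
  have hM : 2 ≤ 2 ^ (2 * l + 1) - 1 := by
    have : 2 ^ 2 ≤ 2 ^ (2 * l + 1) := Nat.pow_le_pow_right two_pos (by omega)
    omega
  refine ⟨⋃ i, A l i, ⋃ i, B l i, R_iUnion_A_eq_R_iUnion_B, iUnion_A_union_iUnion_B,
    iUnion_A_inter_iUnion_B hl, fun h => ?_, ?_, ?_⟩
  · have h0 : 0 ∈ ⋃ i, B l i := h ▸ Set.mem_iUnion.2 ⟨0, zero_mem_A 0⟩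
    exact zero_notMem_B 0 ((mem_iUnion_B le_rfl).1 h0)
  · rw [symmDiff_eq_sup_sdiff_inf]
    change Set.Infinite ((_ ∪ _) \ (_ ∩ _))
    rw [iUnion_A_union_iUnion_B, iUnion_A_inter_iUnion_B hl, ← Set.compl_eq_univ_sdiff]
    exact infinite_compl_setOf_eq_add_mul _ hM
  · rw [iUnion_A_inter_iUnion_B hl]
    exact infinite_setOf_eq_add_mul _ (by omega)
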